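/- arXiv:1712.09047 — 9 statements merged into one kernel-verified Lean document; each statement's English description precedes it below -/
import Mathlib

section
/- Let r₁,…,r_k, s₁,…,s_m be affine-linear forms (with integer coefficients) in variables x̄, and let t₁,…,t_m be nonzero linear forms (with integer coefficients) in variables ȳ. Suppose the system T = {r₁(x̄),…,r_k(x̄), s₁(x̄)+t₁(ȳ),…,s_m(x̄)+t_m(ȳ)} has CS complexity ≤ d, and the system {s₁(x̄)+t₁(ȳ),…,s_m(x̄)+t_m(ȳ)} has CS complexity ≤ d−1. Then the system S = {r₁(x̄),…,r_k(x̄), s₁(x̄)+t₁(ȳ),…,s_m(x̄)+t_m(ȳ), s₁(x̄)+t₁(ȳ′),…,s_m(x̄)+t_m(ȳ′)} of forms in the variables (x̄, ȳ, ȳ′) has CS complexity ≤ d. -/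
section Defs

/-- The family of (affine-)linear forms, identified with their coefficient vectors in `ℚ^ι`,
has CS complexity `≤ d` at the index `j`: the remaining indices can be partitioned into `d`
classes so that the coefficient vector of the `j`-th form does not lie in the affine span of
the coefficient vectors of any single class. -/
def CSAt {I ι : Type*} (L : I → (ι → ℚ)) (d : ℕ) (j : I) : Prop :=
  ∃ c : I → Fin d, ∀ t : Fin d,
    L j ∉ affineSpan ℚ (L '' {i | i ≠ j ∧ c i = t})

/-- The family of forms has CS complexity `≤ d`: it has CS complexity `≤ d` at every index. -/
def CSBounded {I ι : Type*} (L : I → (ι → ℚ)) (d : ℕ) : Prop :=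
  ∀ j : I, CSAt L d j

end Defs

/-!
For an `r`-form `r_j`, substitute `ȳ′ = ȳ`: this maps every form of `S` to a form of `T`, and
only `r_j` to `r_j`, so the partition for `T` at `r_j` pulls back.
For a form `s_j(x̄) + t_j(ȳ)`, put all `r`-forms and all `ȳ′`-copies into one extra class: they
have zero `ȳ`-part while `t_j ≠ 0`, so no affine combination of them gives `s_j + t_j`. The
remaining `ȳ`-copies are partitioned into `d - 1` classes as in `{s_i + t_i}`, which is
recovered by setting `ȳ′ = 0`. The `ȳ′`-copies follow by the symmetry `ȳ ↔ ȳ′`.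
-/

section AffineSpan

variable {k V W : Type*} [Ring k] [AddCommGroup V] [Module k V] [AddCommGroup W] [Module k W]

theorem LinearMap.mem_affineSpan_image (f : V →ₗ[k] W) {s : Set V} {x : V}
    (h : x ∈ affineSpan k s) : f x ∈ affineSpan k (f '' s) :=
  AffineSubspace.map_span f.toAffineMap s ▸ AffineSubspace.mem_map_of_mem f.toAffineMap h

theorem LinearMap.notMem_affineSpan_of_subset_ker (g : V →ₗ[k] W) {s : Set V} {x : V}
    (hs : s ⊆ LinearMap.ker g) (hx : g x ≠ 0) : x ∉ affineSpan k s := fun h =>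
  hx (affineSpan_le_of_subset_coe (s₁ := (LinearMap.ker g).toAffineSubspace) hs h)

end AffineSpan

section CSComplexity

variable {I I' ι ι' : Type*} {L : I → ι → ℚ} {d : ℕ} {j : I}

theorem CSAt.of_linearMap {L' : I' → ι' → ℚ} (f : (ι → ℚ) →ₗ[ℚ] (ι' → ℚ)) (σ : I → I')
    (hf : ∀ i, f (L i) = L' (σ i)) (hσ : ∀ i, σ i = σ j → i = j) (h : CSAt L' d (σ j)) :
    CSAt L d j := by
  obtain ⟨c, hc⟩ := h
  refine ⟨c ∘ σ, fun t hmem => hc t ?_⟩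
  have himage : f '' (L '' {i | i ≠ j ∧ c (σ i) = t}) ⊆ L' '' {i | i ≠ σ j ∧ c i = t} := by
    rintro _ ⟨_, ⟨i, ⟨hij, hit⟩, rfl⟩, rfl⟩
    exact ⟨σ i, ⟨mt (hσ i) hij, hit⟩, (hf i).symm⟩
  exact hf j ▸ affineSpan_mono ℚ himage (f.mem_affineSpan_image hmem)

/-- The forms outside the range of `e`, all killed by `g`, make up the extra class. -/
theorem CSAt.succ_of_comp_embedding {J W : Type*} [AddCommGroup W] [Module ℚ W]
    {e : J → I} (he : Function.Injective e) {j : J} (g : (ι → ℚ) →ₗ[ℚ] W)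
    (hker : ∀ i ∉ Set.range e, g (L i) = 0) (hj : g (L (e j)) ≠ 0) (h : CSAt (L ∘ e) d j) :
    CSAt L (d + 1) (e j) := by
  classical
  obtain ⟨c, hc⟩ := h
  refine ⟨Function.extend e (Fin.castSucc ∘ c) (fun _ => Fin.last d), fun t => ?_⟩
  induction t using Fin.lastCases with
  | last =>
    refine g.notMem_affineSpan_of_subset_ker ?_ hj
    rintro _ ⟨i, ⟨-, hi⟩, rfl⟩
    refine hker i fun ⟨k, hk⟩ => ?_
    rw [← hk, he.extend_apply] at hi
    exact Fin.castSucc_ne_last _ hi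
  | cast t =>
    refine fun hmem => hc t (affineSpan_mono ℚ ?_ hmem)
    rintro _ ⟨i, ⟨hij, hi⟩, rfl⟩
    by_cases hrange : ∃ k, e k = i
    · obtain ⟨k, rfl⟩ := hrange
      rw [he.extend_apply] at hi
      exact ⟨k, ⟨fun h => hij (h ▸ rfl), Fin.castSucc_injective _ hi⟩, rfl⟩
    · rw [Function.extend_apply' _ _ _ hrange] at hi
      exact absurd hi.symm (Fin.castSucc_ne_last t)

end CSComplexity

/-- Substituting `ȳ′ = ȳ` into a form in `(x̄, ȳ, ȳ′)`: the `ȳ`- and `ȳ′`-coefficients add up. -/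
def substDiag (R α β : Type*) [CommSemiring R] : (α ⊕ (β ⊕ β) → R) →ₗ[R] (α ⊕ β → R) where
  toFun v := Sum.elim (v ∘ Sum.inl) (v ∘ Sum.inr ∘ Sum.inl + v ∘ Sum.inr ∘ Sum.inr)
  map_add' u v := by
    ext (p | p)
    · rfl
    · simp only [Sum.elim_inr, Pi.add_apply, Function.comp_apply]
      ring
  map_smul' r v := by
    ext (p | p)
    · rfl
    · simp only [Sum.elim_inr, Pi.add_apply, Pi.smul_apply, Function.comp_apply, smul_eq_mul,
        RingHom.id_apply]
      ring

section Doubling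

variable {I J α β : Type*} (r : I → α → ℚ) (s : J → α → ℚ) (t : J → β → ℚ)

def baseSystem : I ⊕ J → α ⊕ β → ℚ :=
  Sum.elim (fun i => Sum.elim (r i) 0) (fun i => Sum.elim (s i) (t i))

def doubledSystem : I ⊕ (J ⊕ J) → α ⊕ (β ⊕ β) → ℚ :=
  Sum.elim (fun i => Sum.elim (r i) 0)
    (Sum.elim (fun i => Sum.elim (s i) (Sum.elim (t i) 0))
      (fun i => Sum.elim (s i) (Sum.elim 0 (t i))))

variable {r s t} {d : ℕ}

theorem CSAt.doubledSystem_inl {j : I} (h : CSAt (baseSystem r s t) d (Sum.inl j)) :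
    CSAt (doubledSystem r s t) d (Sum.inl j) :=
  CSAt.of_linearMap (substDiag ℚ α β) (Sum.map id (Sum.elim id id))
    (by rintro (i | i | i) <;> ext (p | p) <;> simp [baseSystem, doubledSystem, substDiag])
    (by rintro (i | i | i) <;> simp) h

theorem CSAt.doubledSystem_inr_inl {j : J} (ht : t j ≠ 0)
    (h : CSAt (fun i => Sum.elim (s i) (t i)) d j) :
    CSAt (doubledSystem r s t) (d + 1) (Sum.inr (Sum.inl j)) := by
  refine CSAt.succ_of_comp_embedding (e := Sum.inr ∘ Sum.inl) (j := j)
    (Sum.inr_injective.comp Sum.inl_injective) (LinearMap.funLeft ℚ ℚ (Sum.inr ∘ Sum.inl))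
    ?_ ht ?_
  · rintro (i | i | i) hi
    · rfl
    · exact absurd ⟨i, rfl⟩ hi
    · rfl
  · exact CSAt.of_linearMap (LinearMap.funLeft ℚ ℚ (Sum.map id Sum.inl)) id
      (fun i => by ext (p | p) <;> rfl) (fun _ => id) h

theorem CSAt.doubledSystem_swap {j : J ⊕ J}
    (h : CSAt (doubledSystem r s t) d (Sum.inr j.swap)) :
    CSAt (doubledSystem r s t) d (Sum.inr j) :=
  CSAt.of_linearMap (LinearMap.funLeft ℚ ℚ (Sum.map id Sum.swap)) (Sum.map id Sum.swap)
    (by rintro (i | i | i) <;> ext (p | p | p) <;> rfl)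
    (fun _ h => Sum.map_injective.2 ⟨Function.injective_id, Sum.swap_leftInverse.injective⟩ h) h

theorem CSBounded.doubling (ht : ∀ i, t i ≠ 0) (hT : CSBounded (baseSystem r s t) d)
    (hst : CSBounded (fun i => Sum.elim (s i) (t i)) (d - 1)) :
    CSBounded (doubledSystem r s t) d := by
  have first_copy (j : J) : CSAt (doubledSystem r s t) d (Sum.inr (Sum.inl j)) := by
    -- a partition of a nonempty family into `d - 1` classes forces `d - 1 ≠ 0`
    obtain ⟨c, -⟩ := hst j
    rw [show d = d - 1 + 1 by have := (c j).pos; omega]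
    exact CSAt.doubledSystem_inr_inl (ht j) (hst j)
  rintro (j | j | j)
  · exact CSAt.doubledSystem_inl (hT (Sum.inl j))
  · exact first_copy j
  · exact CSAt.doubledSystem_swap (first_copy j)

end Doubling

/-- doubling lemma.  Let `r₁,…,r_K` and `s₁,…,s_M` be (affine-)linear forms
with integer coefficients in the variables `x̄` (of size `a`) and `t₁,…,t_M` nonzero linear
forms with integer coefficients in the variables `ȳ` (of size `b`).  If the system
`T = {r_i(x̄), s_i(x̄)+t_i(ȳ)}` has CS complexity `≤ d` and `{s_i(x̄)+t_i(ȳ)}` has CS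
complexity `≤ d-1`, then the doubled system
`S = {r_i(x̄), s_i(x̄)+t_i(ȳ), s_i(x̄)+t_i(ȳ′)}` in the variables `(x̄, ȳ, ȳ′)` has CS
complexity `≤ d`. -/
theorem stmt6 (a b K M d : ℕ)
    (rc : Fin K → Fin a → ℤ) (sc : Fin M → Fin a → ℤ) (tc : Fin M → Fin b → ℤ)
    (htc : ∀ i, tc i ≠ 0)
    (hT : CSBounded
      (Sum.elim (fun i : Fin K => (Sum.elim (fun x => (rc i x : ℚ)) (fun _ => 0) : Fin a ⊕ Fin b → ℚ))
        (fun i : Fin M => (Sum.elim (fun x => (sc i x : ℚ)) (fun y => (tc i y : ℚ)) : Fin a ⊕ Fin b → ℚ)))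
      d)
    (hst : CSBounded
      (fun i : Fin M => (Sum.elim (fun x => (sc i x : ℚ)) (fun y => (tc i y : ℚ)) : Fin a ⊕ Fin b → ℚ))
      (d - 1)) :
    CSBounded
      (Sum.elim
        (fun i : Fin K =>
          (Sum.elim (fun x => (rc i x : ℚ)) (fun _ => 0) : Fin a ⊕ (Fin b ⊕ Fin b) → ℚ))
        (Sum.elim
          (fun i : Fin M =>
            (Sum.elim (fun x => (sc i x : ℚ)) (Sum.elim (fun y => (tc i y : ℚ)) (fun _ => 0)) :
              Fin a ⊕ (Fin b ⊕ Fin b) → ℚ))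
          (fun i : Fin M =>
            (Sum.elim (fun x => (sc i x : ℚ)) (Sum.elim (fun _ => 0) (fun y => (tc i y : ℚ))) :
              Fin a ⊕ (Fin b ⊕ Fin b) → ℚ))))
      d :=
  CSBounded.doubling (fun i => by simpa [funext_iff] using htc i) hT hst
end

section
/- For every integer m ≥ 1, the family of 2^m affine-linear forms in the m+1 variables (x, v₁,…,v_m) given by (x, v₁,…,v_m) ↦ x + ω·v̄ for ω ∈ {0,1}^m (where ω·v̄ = Σᵢ ωᵢvᵢ), i.e. the system of forms corresponding to the vertices of the m-dimensional cube (x|v₁,…,v_m), has CS complexity ≤ m. -/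
/-!
Colour every vertex `ω ≠ j` by a coordinate `t` at which `ω` and `j` differ. All vertices of
colour `t` then have the same `vₜ`-coefficient, namely the one that `j` does not have. Having a
prescribed value at a coordinate is an affine condition, so it holds on the whole affine span of
the class, which therefore misses `j`.
-/

section Defs

/-- The `2^m` vertex forms `(x, v₁, …, v_m) ↦ x + ω·v̄` of the cube `(x|v₁,…,v_m)`,
identified with their coefficient vectors; the vertex is indexed by `ω ⊆ {1,…,m}`,
the variable `x` by `Sum.inl ()` and the variable `vᵢ` by `Sum.inr i`. -/
def cubeForms (m : ℕ) : Finset (Fin m) → (Unit ⊕ Fin m → ℚ) := fun ω =>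
  Sum.elim (fun _ => 1) (fun i => if i ∈ ω then 1 else 0)

end Defs

open Finset
open scoped symmDiff

theorem AffineMap.apply_eq_of_mem_affineSpan {k V₁ P₁ V₂ P₂ : Type*} [Ring k]
    [AddCommGroup V₁] [Module k V₁] [AddTorsor V₁ P₁] [AddCommGroup V₂] [Module k V₂]
    [AddTorsor V₂ P₂] (f : P₁ →ᵃ[k] P₂) {s : Set P₁} {q : P₂} (hs : ∀ p ∈ s, f p = q)
    {p : P₁} (hp : p ∈ affineSpan k s) : f p = q := by
  have hspan : affineSpan k (f '' s) ≤ affineSpan k {q} :=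
    affineSpan_mono k (Set.image_subset_iff.mpr hs)
  rw [← AffineSubspace.mem_affineSpan_singleton (k := k)]
  exact hspan (AffineSubspace.map_span f s ▸ AffineSubspace.mem_map_of_mem f hp)

theorem csAt_of_apply_eq {I ι : Type*} {d : ℕ} (L : I → ι → ℚ) (j : I) (c : I → Fin d)
    (e : Fin d → ι) (q : Fin d → ℚ) (hc : ∀ i ≠ j, L i (e (c i)) = q (c i))
    (hj : ∀ t, L j (e t) ≠ q t) : CSAt L d j := by
  refine ⟨c, fun t hmem => hj t ?_⟩
  refine (LinearMap.proj (R := ℚ) (e t)).toAffineMap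
    |>.apply_eq_of_mem_affineSpan ?_ hmem
  rintro _ ⟨i, ⟨hij, rfl⟩, rfl⟩
  exact hc i hij

def firstDiff {m : ℕ} (hm : 1 ≤ m) (j ω : Finset (Fin m)) : Fin m :=
  if h : (ω ∆ j).Nonempty then (ω ∆ j).min' h else ⟨0, hm⟩

theorem firstDiff_mem_symmDiff {m : ℕ} (hm : 1 ≤ m) {j ω : Finset (Fin m)} (h : ω ≠ j) :
    firstDiff hm j ω ∈ ω ∆ j := by
  have hne : (ω ∆ j).Nonempty := symmDiff_nonempty.mpr h
  rw [firstDiff, dif_pos hne]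
  exact min'_mem _ hne

theorem cubeForms_inr_of_mem_symmDiff {m : ℕ} {j ω : Finset (Fin m)} {t : Fin m}
    (ht : t ∈ ω ∆ j) : cubeForms m ω (Sum.inr t) = if t ∈ j then 0 else 1 := by
  rcases mem_symmDiff.mp ht with ⟨htω, htj⟩ | ⟨htj, htω⟩ <;> simp [cubeForms, *]

theorem cubeForms_inr_ne (m : ℕ) (j : Finset (Fin m)) (t : Fin m) :
    cubeForms m j (Sum.inr t) ≠ if t ∈ j then 0 else 1 := by
  by_cases htj : t ∈ j <;> simp [cubeForms, htj]

/-- For every `m ≥ 1`, the system of `2^m` linear forms in `(x, v₁,…,v_m)`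
corresponding to the vertices `x + ω·v̄`, `ω ∈ {0,1}^m`, of the `m`-dimensional cube
`(x|v₁,…,v_m)` has CS complexity `≤ m`. -/
theorem stmt7 (m : ℕ) (hm : 1 ≤ m) : CSBounded (cubeForms m) m := fun j =>
  csAt_of_apply_eq (cubeForms m) j (firstDiff hm j) Sum.inr (fun t => if t ∈ j then 0 else 1)
    (fun _ hω => cubeForms_inr_of_mem_symmDiff (firstDiff_mem_symmDiff hm hω))
    (cubeForms_inr_ne m j)
end

section
/- Let j ≥ 1 and m ≥ 0 be integers. The family of affine-linear forms in the variables (v, v₁,…,v_j, u, u₁,…,u_j, w₁,…,w_m) consisting of the 2^{j+m} vertex forms of the cube (v | v₁,…,v_j, w₁,…,w_m) together with the 2^{j+m} vertex forms of the cube (u | u₁,…,u_j, w₁,…,w_m) has CS complexity ≤ j + m. -/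
section Defs

/-- The vertex forms of the two cubes `(v | v₁,…,v_j, w₁,…,w_m)` and
`(u | u₁,…,u_j, w₁,…,w_m)`.  Variables: `Sum.inl (false, none) = v`,
`Sum.inl (false, some i) = vᵢ`, `Sum.inl (true, none) = u`, `Sum.inl (true, some i) = uᵢ`,
`Sum.inr i = wᵢ`.  A vertex is indexed by `(side, ω, ν)` with `side : Bool` choosing the
cube, `ω ⊆ {1,…,j}` and `ν ⊆ {1,…,m}`; the vertex form is
`base(side) + Σ_{i∈ω} dir(side)ᵢ + Σ_{i∈ν} wᵢ`. -/
def twoCubeForms (j m : ℕ) :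
    Bool × Finset (Fin j) × Finset (Fin m) → ((Bool × Option (Fin j)) ⊕ Fin m) → ℚ :=
  fun p q =>
    match q with
    | Sum.inl (b, none) => if b = p.1 then 1 else 0
    | Sum.inl (b, some i) => if b = p.1 ∧ i ∈ p.2.1 then 1 else 0
    | Sum.inr i => if i ∈ p.2.2 then 1 else 0

end Defs

lemma not_mem_affineSpan_of_lin {ι : Type*} {S : Set (ι → ℚ)}
    (φ : (ι → ℚ) →ₗ[ℚ] ℚ) (hS : ∀ x ∈ S, φ x = 0) {y : ι → ℚ} (hy : φ y ≠ 0) :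
    y ∉ affineSpan ℚ S := by
  intro hmem
  have hle : affineSpan ℚ S ≤ (LinearMap.ker φ).toAffineSubspace :=
    affineSpan_le.mpr fun x hx => Submodule.mem_toAffineSubspace.mpr (hS x hx)
  exact hy (LinearMap.mem_ker.mp (Submodule.mem_toAffineSubspace.mp (hle hmem)))

/-- Let `j ≥ 1` and `m ≥ 0`.  The family of linear forms in the variables
`(v, v₁,…,v_j, u, u₁,…,u_j, w₁,…,w_m)` consisting of the `2^{j+m}` vertex forms of the cube
`(v | v₁,…,v_j, w₁,…,w_m)` together with the `2^{j+m}` vertex forms of the cube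
`(u | u₁,…,u_j, w₁,…,w_m)` has CS complexity `≤ j + m`. -/
theorem stmt9 (j m : ℕ) (hj : 1 ≤ j) : CSBounded (twoCubeForms j m) (j + m) := by
  classical
  rintro ⟨s, ω, ν⟩
  set c' : Bool × Finset (Fin j) × Finset (Fin m) → Fin j ⊕ Fin m := fun q =>
    if q.1 = s then
      (if h1 : q.2.1 = ω then
        (if h2 : q.2.2 = ν then Sum.inl ⟨0, hj⟩
         else Sum.inr ((symmDiff q.2.2 ν).min' (Finset.symmDiff_nonempty.mpr h2)))
       else Sum.inl ((symmDiff q.2.1 ω).min' (Finset.symmDiff_nonempty.mpr h1)))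
    else Sum.inl ⟨0, hj⟩ with hc'
  refine ⟨fun q => finSumFinEquiv (c' q), fun t => ?_⟩
  rcases ht : finSumFinEquiv.symm t with i | i
  · -- class indexed by a direction variable vᵢ/uᵢ
    have key : ∀ q : Bool × Finset (Fin j) × Finset (Fin m),
        q ≠ (s, ω, ν) → finSumFinEquiv (c' q) = t →
        q.1 ≠ s ∨ (q.1 = s ∧ i ∈ symmDiff q.2.1 ω) := by
      intro q hq hct
      have hcq : c' q = Sum.inl i := by
        apply finSumFinEquiv.injective
        rw [hct, ← ht, Equiv.apply_symm_apply]
      rw [hc'] at hcq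
      dsimp only at hcq
      by_cases h0 : q.1 = s
      · rw [if_pos h0] at hcq
        by_cases h1 : q.2.1 = ω
        · rw [dif_pos h1] at hcq
          by_cases h2 : q.2.2 = ν
          · exact absurd (Prod.ext h0 (Prod.ext h1 h2)) hq
          · rw [dif_neg h2] at hcq; simp at hcq
        · rw [dif_neg h1] at hcq
          rw [Sum.inl.injEq] at hcq
          exact Or.inr ⟨h0, hcq ▸ Finset.min'_mem _ (Finset.symmDiff_nonempty.mpr h1)⟩
      · exact Or.inl h0
    by_cases hiω : i ∈ ω
    · refine not_mem_affineSpan_of_lin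
        (LinearMap.proj (R := ℚ) (Sum.inl (s, some i))) ?_ ?_
      · rintro x ⟨q, ⟨hq, hct⟩, rfl⟩
        rcases key q hq hct with h | ⟨h0, hmem⟩
        · simp [twoCubeForms, LinearMap.proj_apply, Ne.symm h]
        · have hni : i ∉ q.2.1 := by
            rw [Finset.mem_symmDiff] at hmem; tauto
          simp [twoCubeForms, LinearMap.proj_apply, hni]
      · simp [twoCubeForms, LinearMap.proj_apply, hiω]
    · refine not_mem_affineSpan_of_lin
        (LinearMap.proj (R := ℚ) (φ := fun _ : (Bool × Option (Fin j)) ⊕ Fin m => ℚ) (Sum.inl (s, some i))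
          - LinearMap.proj (R := ℚ) (Sum.inl (s, none))) ?_ ?_
      · rintro x ⟨q, ⟨hq, hct⟩, rfl⟩
        rcases key q hq hct with h | ⟨h0, hmem⟩
        · simp [twoCubeForms, LinearMap.sub_apply, LinearMap.proj_apply, Ne.symm h]
        · have hni : i ∈ q.2.1 := by
            rw [Finset.mem_symmDiff] at hmem; tauto
          simp [twoCubeForms, LinearMap.sub_apply, LinearMap.proj_apply, hni, h0]
      · simp [twoCubeForms, LinearMap.sub_apply, LinearMap.proj_apply, hiω]
  · -- class indexed by a common variable wᵢ
    have key : ∀ q : Bool × Finset (Fin j) × Finset (Fin m),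
        q ≠ (s, ω, ν) → finSumFinEquiv (c' q) = t →
        q.1 = s ∧ i ∈ symmDiff q.2.2 ν := by
      intro q hq hct
      have hcq : c' q = Sum.inr i := by
        apply finSumFinEquiv.injective
        rw [hct, ← ht, Equiv.apply_symm_apply]
      rw [hc'] at hcq
      dsimp only at hcq
      by_cases h0 : q.1 = s
      · rw [if_pos h0] at hcq
        by_cases h1 : q.2.1 = ω
        · rw [dif_pos h1] at hcq
          by_cases h2 : q.2.2 = ν
          · exact absurd (Prod.ext h0 (Prod.ext h1 h2)) hq
          · rw [dif_neg h2, Sum.inr.injEq] at hcq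
            exact ⟨h0, hcq ▸ Finset.min'_mem _ (Finset.symmDiff_nonempty.mpr h2)⟩
        · rw [dif_neg h1] at hcq; simp at hcq
      · rw [if_neg h0] at hcq; simp at hcq
    by_cases hiν : i ∈ ν
    · refine not_mem_affineSpan_of_lin (LinearMap.proj (R := ℚ) (Sum.inr i)) ?_ ?_
      · rintro x ⟨q, ⟨hq, hct⟩, rfl⟩
        obtain ⟨h0, hmem⟩ := key q hq hct
        have hni : i ∉ q.2.2 := by
          rw [Finset.mem_symmDiff] at hmem; tauto
        simp [twoCubeForms, LinearMap.proj_apply, hni]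
      · simp [twoCubeForms, LinearMap.proj_apply, hiν]
    · refine not_mem_affineSpan_of_lin
        (LinearMap.proj (R := ℚ) (φ := fun _ : (Bool × Option (Fin j)) ⊕ Fin m => ℚ) (Sum.inr i)
          - LinearMap.proj (R := ℚ) (Sum.inl (s, none))) ?_ ?_
      · rintro x ⟨q, ⟨hq, hct⟩, rfl⟩
        obtain ⟨h0, hmem⟩ := key q hq hct
        have hni : i ∈ q.2.2 := by
          rw [Finset.mem_symmDiff] at hmem; tauto
        simp [twoCubeForms, LinearMap.sub_apply, LinearMap.proj_apply, hni, h0]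
      · simp [twoCubeForms, LinearMap.sub_apply, LinearMap.proj_apply, hiν]
end

section
/- Fix an integer m ≥ 1 and a sign map ε : [m] → {±1}; for ȳ = (y₁,…,y_m) and ω ∈ {0,1}^m write ω^ε·ȳ := Σᵢ ε(i)ωᵢyᵢ. The family of linear forms in the m(m+1) variables ȳ⁰, ȳ¹, …, ȳ^m (each ȳ^l an m-tuple of variables) given by ω^ε·ȳ⁰ + Σ_{l=1}^m ν_l (ω^ε·ȳ^l), indexed by ω ∈ {0,1}^m ∖ {0} and ν ∈ {0,1}^m, has CS complexity ≤ m. -/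
section Defs

/-- The family of linear forms `ω^ε·ȳ⁰ + Σ_{l=1}^m ν_l (ω^ε·ȳ^l)`, indexed by a nonempty
`ω ⊆ {1,…,m}` (i.e. `ω ∈ {0,1}^m ∖ {0}`) and `ν ⊆ {1,…,m}` (i.e. `ν ∈ {0,1}^m`), in the
`m(m+1)` variables `y^l_i` where `l` ranges over `{0,1,…,m}` (encoded as `Option (Fin m)`
with `none = 0`) and `i` over `{1,…,m}`.  Here `ω^ε·ȳ = Σ_i ε(i) ω_i y_i`. -/
def signedCubeForms (m : ℕ) (ε : Fin m → ℤ) :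
    {ω : Finset (Fin m) // ω.Nonempty} × Finset (Fin m) → Option (Fin m) × Fin m → ℚ :=
  fun p q =>
    match q.1 with
    | none => if q.2 ∈ p.1.1 then (ε q.2 : ℚ) else 0
    | some l => if l ∈ p.2 ∧ q.2 ∈ p.1.1 then (ε q.2 : ℚ) else 0

end Defs

open scoped symmDiff

lemma notMem_affineSpan_of_linearMap {V : Type*} [AddCommGroup V] [Module ℚ V]
    (u : V →ₗ[ℚ] ℚ) (s : Set V) (v : ℚ) (h : ∀ y ∈ s, u y = v) (x : V) (hx : u x ≠ v) :
    x ∉ affineSpan ℚ s := by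
  intro hmem
  apply hx
  have h1 : affineSpan ℚ s ≤ (affineSpan ℚ ({v} : Set ℚ)).comap u.toAffineMap := by
    rw [affineSpan_le]
    intro y hy
    simp only [AffineSubspace.coe_comap, Set.mem_preimage, LinearMap.coe_toAffineMap]
    rw [h y hy]
    exact mem_affineSpan ℚ rfl
  have h2 := h1 hmem
  simp only [AffineSubspace.mem_comap, LinearMap.coe_toAffineMap] at h2
  simpa using h2

lemma scf_none (m : ℕ) (ε : Fin m → ℤ)
    (p : {ω : Finset (Fin m) // ω.Nonempty} × Finset (Fin m)) (i : Fin m) :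
    signedCubeForms m ε p (none, i) = if i ∈ p.1.1 then (ε i : ℚ) else 0 := rfl

lemma scf_some (m : ℕ) (ε : Fin m → ℤ)
    (p : {ω : Finset (Fin m) // ω.Nonempty} × Finset (Fin m)) (l i : Fin m) :
    signedCubeForms m ε p (some l, i) = if l ∈ p.2 ∧ i ∈ p.1.1 then (ε i : ℚ) else 0 := rfl

/-- Fix `m ≥ 1` and a sign map `ε : [m] → {±1}`.  The family of linear forms
`ω^ε·ȳ⁰ + Σ_{l=1}^m ν_l (ω^ε·ȳ^l)`, indexed by `ω ∈ {0,1}^m ∖ {0}` and `ν ∈ {0,1}^m`, in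
the variables `ȳ⁰, ȳ¹, …, ȳ^m`, has CS complexity `≤ m`. -/
theorem stmt10 (m : ℕ) (hm : 1 ≤ m) (ε : Fin m → ℤ) (hε : ∀ i, ε i = 1 ∨ ε i = -1) :
    CSBounded (signedCubeForms m ε) m := by
  rintro ⟨⟨ω, hω⟩, ν⟩
  have hεsq : ∀ i : Fin m, (ε i : ℚ) * (ε i : ℚ) = 1 := by
    intro i; rcases hε i with h | h <;> rw [h] <;> norm_num
  set i₀ := ω.min' hω with hi₀
  have hi₀ω : i₀ ∈ ω := ω.min'_mem hω
  refine ⟨fun p =>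
    if h : (ω \ p.1.1).Nonempty then (ω \ p.1.1).min' h
    else if h2 : (p.1.1 \ ω).Nonempty then (p.1.1 \ ω).min' h2
    else if h3 : (ν ∆ p.2).Nonempty then (ν ∆ p.2).min' h3
    else i₀, ?_⟩
  intro t
  by_cases htω : t ∈ ω
  · -- class `t ∈ ω`
    refine notMem_affineSpan_of_linearMap
      ((ε t : ℚ) • LinearMap.proj (some t, t)
        - (((1 : ℚ) - if t ∈ ν then 1 else 0) * (ε t : ℚ)) •
            LinearMap.proj ((none : Option (Fin m)), t)) _ 0 ?_ _ ?_
    · rintro y ⟨p, ⟨hpj, hpc⟩, rfl⟩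
      obtain ⟨⟨ω', hω'⟩, ν'⟩ := p
      simp only [LinearMap.sub_apply, LinearMap.smul_apply, LinearMap.proj_apply,
        smul_eq_mul, scf_none, scf_some]
      dsimp only at hpc ⊢
      split_ifs at hpc with h h2 h3
      · -- t = min (ω \ ω'), so t ∉ ω'
        have ht : t ∈ ω \ ω' := hpc ▸ Finset.min'_mem _ h
        have htω' : t ∉ ω' := (Finset.mem_sdiff.mp ht).2
        simp [htω']
      · -- t = min (ω' \ ω) contradicts t ∈ ω
        have ht : t ∈ ω' \ ω := hpc ▸ Finset.min'_mem _ h2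
        exact (((Finset.mem_sdiff.mp ht).2) htω).elim
      · -- ω' = ω, t ∈ ν ∆ ν'
        have hωω' : ω' = ω := by
          rw [Finset.not_nonempty_iff_eq_empty, Finset.sdiff_eq_empty_iff_subset] at h h2
          exact le_antisymm h2 h
        have ht : t ∈ ν ∆ ν' := hpc ▸ Finset.min'_mem _ h3
        rw [Finset.mem_symmDiff] at ht
        have htω' : t ∈ ω' := hωω' ▸ htω
        rcases hε t with hst | hst <;>
          rcases ht with ⟨htν, htν'⟩ | ⟨htν', htν⟩ <;>
            simp [htν, htν', htω', hst] <;> norm_num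
      · -- impossible: p = j
        rw [Finset.not_nonempty_iff_eq_empty, Finset.sdiff_eq_empty_iff_subset] at h h2
        rw [Finset.not_nonempty_iff_eq_empty, ← Finset.bot_eq_empty, symmDiff_eq_bot] at h3
        exact absurd (by simp [Prod.ext_iff, Subtype.ext_iff, le_antisymm h2 h, h3.symm]) hpj
    · simp only [LinearMap.sub_apply, LinearMap.smul_apply, LinearMap.proj_apply,
        smul_eq_mul, scf_none, scf_some]
      rcases hε t with hst | hst <;> by_cases htν : t ∈ ν <;>
        simp [htν, htω, hst] <;> norm_num
  · -- class `t ∉ ω`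
    refine notMem_affineSpan_of_linearMap
      ((ε i₀ : ℚ) • LinearMap.proj (some t, i₀)
        - (ε t : ℚ) • LinearMap.proj (some t, t)
        + (((1 : ℚ) - if t ∈ ν then 1 else 0) * (ε t : ℚ)) •
            LinearMap.proj ((none : Option (Fin m)), t)) _
      ((1 : ℚ) - if t ∈ ν then 1 else 0) ?_ _ ?_
    · rintro y ⟨p, ⟨hpj, hpc⟩, rfl⟩
      obtain ⟨⟨ω', hω'⟩, ν'⟩ := p
      simp only [LinearMap.add_apply, LinearMap.sub_apply, LinearMap.smul_apply,
        LinearMap.proj_apply, smul_eq_mul, scf_none, scf_some]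
      dsimp only at hpc ⊢
      split_ifs at hpc with h h2 h3
      · -- t = min (ω \ ω') ∈ ω contradicts t ∉ ω
        have ht : t ∈ ω \ ω' := hpc ▸ Finset.min'_mem _ h
        exact (htω ((Finset.mem_sdiff.mp ht).1)).elim
      · -- ω ⊆ ω', t ∈ ω' \ ω
        rw [Finset.not_nonempty_iff_eq_empty, Finset.sdiff_eq_empty_iff_subset] at h
        have ht : t ∈ ω' \ ω := hpc ▸ Finset.min'_mem _ h2
        have htω' : t ∈ ω' := (Finset.mem_sdiff.mp ht).1
        have hi₀ω' : i₀ ∈ ω' := h hi₀ω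
        rcases hε t with hst | hst <;> rcases hε i₀ with hsi | hsi <;>
          by_cases htν' : t ∈ ν' <;>
            simp [htν', htω', hi₀ω', hst, hsi] <;> split_ifs <;> norm_num
      · -- ω' = ω, t ∈ ν ∆ ν'
        have hωω' : ω' = ω := by
          rw [Finset.not_nonempty_iff_eq_empty, Finset.sdiff_eq_empty_iff_subset] at h h2
          exact le_antisymm h2 h
        have ht : t ∈ ν ∆ ν' := hpc ▸ Finset.min'_mem _ h3
        rw [Finset.mem_symmDiff] at ht
        have htω' : t ∉ ω' := hωω' ▸ htω
        have hi₀ω' : i₀ ∈ ω' := hωω' ▸ hi₀ω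
        rcases hε i₀ with hsi | hsi <;>
          rcases ht with ⟨htν, htν'⟩ | ⟨htν', htν⟩ <;>
            simp [htν, htν', htω', hi₀ω', hsi] <;> norm_num
      · rw [Finset.not_nonempty_iff_eq_empty, Finset.sdiff_eq_empty_iff_subset] at h h2
        rw [Finset.not_nonempty_iff_eq_empty, ← Finset.bot_eq_empty, symmDiff_eq_bot] at h3
        exact absurd (by simp [Prod.ext_iff, Subtype.ext_iff, le_antisymm h2 h, h3.symm]) hpj
    · simp only [LinearMap.add_apply, LinearMap.sub_apply, LinearMap.smul_apply,
        LinearMap.proj_apply, smul_eq_mul, scf_none, scf_some]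
      rcases hε i₀ with hsi | hsi <;> by_cases htν : t ∈ ν <;>
        simp [htν, htω, hi₀ω, hsi] <;> norm_num
end

section
/- Let p : Z → Y be a surjective map of finite nonempty sets which is C-homogeneous for some C ≥ 1, i.e. |p⁻¹(y)| ≤ C |p⁻¹(y′)| for all y, y′ ∈ Y. Let ε > 0, M > 0, and let P ⊆ Z satisfy |P| ≥ (1−ε)|Z|. Then the set Q = {y ∈ Y : |p⁻¹(y) ∩ P| ≥ (1 − C²Mε)|p⁻¹(y)|} satisfies |Q| ≥ (1 − 1/M)|Y|. -/
open Finset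

/-- Fubini lemma.  Let `p : Z → Y` be a surjective map of finite nonempty
sets which is `C`-homogeneous (`|p⁻¹(y)| ≤ C |p⁻¹(y′)|` for all `y, y′`), let `ε > 0`,
`M > 0`, and let `P ⊆ Z` with `|P| ≥ (1−ε)|Z|`.  Then
`Q = {y : |p⁻¹(y) ∩ P| ≥ (1 − C²Mε)|p⁻¹(y)|}` satisfies `|Q| ≥ (1 − 1/M)|Y|`. -/
theorem stmt14 {Z Y : Type*} [Fintype Z] [Fintype Y] [DecidableEq Z] [DecidableEq Y]
    [Nonempty Z] [Nonempty Y]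
    (p : Z → Y) (hsurj : Function.Surjective p)
    (C : ℝ) (hC : 1 ≤ C)
    (hhom : ∀ y y' : Y,
      ((Finset.univ.filter fun z => p z = y).card : ℝ) ≤
        C * ((Finset.univ.filter fun z => p z = y').card : ℝ))
    (ε M : ℝ) (hε : 0 < ε) (hM : 0 < M)
    (P : Finset Z) (hP : (1 - ε) * (Fintype.card Z : ℝ) ≤ (P.card : ℝ)) :
    (1 - 1 / M) * (Fintype.card Y : ℝ) ≤
      ((Finset.univ.filter fun y : Y =>
          (1 - C ^ 2 * M * ε) * ((Finset.univ.filter fun z => p z = y).card : ℝ) ≤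
            (((Finset.univ.filter fun z => p z = y) ∩ P).card : ℝ)).card : ℝ) := by
  classical
  have hC0 : (0:ℝ) < C := lt_of_lt_of_le one_pos hC
  set f : Y → ℕ := fun y => (Finset.univ.filter fun z => p z = y).card with hf
  set a : Y → ℕ := fun y => ((Finset.univ.filter fun z => p z = y) ∩ P).card with ha
  obtain ⟨y₀⟩ := ‹Nonempty Y›
  have hn0 : 0 < (f y₀ : ℝ) := by
    obtain ⟨z, hz⟩ := hsurj y₀
    have hz' : z ∈ Finset.univ.filter fun z => p z = y₀ := by simp [hz]
    exact_mod_cast Finset.card_pos.mpr ⟨z, hz'⟩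
  -- fiberwise sums
  have hsumf : ∑ y, (f y : ℕ) = Fintype.card Z :=
    (Finset.card_eq_sum_card_fiberwise (fun x _ => Finset.mem_univ (p x))).symm
  have hinter : ∀ y, (Finset.univ.filter fun z => p z = y) ∩ P
      = P.filter fun z => p z = y := by
    intro y; ext z; simp [and_comm]
  have hsuma : ∑ y, (a y : ℕ) = P.card := by
    rw [Finset.card_eq_sum_card_fiberwise (fun x _ => Finset.mem_univ (p x)) (t := Finset.univ)]
    exact Finset.sum_congr rfl fun y _ => congrArg Finset.card (hinter y)
  have hale : ∀ y, a y ≤ f y := fun y => Finset.card_le_card (Finset.inter_subset_left)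
  set Q := Finset.univ.filter fun y : Y =>
      (1 - C ^ 2 * M * ε) * ((f y : ℕ) : ℝ) ≤ ((a y : ℕ) : ℝ) with hQ
  set B := Finset.univ.filter fun y : Y =>
      ¬ ((1 - C ^ 2 * M * ε) * ((f y : ℕ) : ℝ) ≤ ((a y : ℕ) : ℝ)) with hB
  have hcardQB : Q.card + B.card = Fintype.card Y := by
    simpa using Finset.card_filter_add_card_filter_not
      (s := Finset.univ) (p := fun y : Y =>
        (1 - C ^ 2 * M * ε) * ((f y : ℕ) : ℝ) ≤ ((a y : ℕ) : ℝ))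
  -- key pointwise bound on B
  have hkey : ∀ y ∈ B, C * M * ε * (f y₀ : ℝ) ≤ (f y : ℝ) - (a y : ℝ) := by
    intro y hy
    rw [hB, Finset.mem_filter] at hy
    have h1 : ((a y : ℕ) : ℝ) < (1 - C ^ 2 * M * ε) * (f y : ℝ) := lt_of_not_ge hy.2
    have h2 : (f y₀ : ℝ) ≤ C * (f y : ℝ) := hhom y₀ y
    have h3 := mul_le_mul_of_nonneg_left h2 (show (0:ℝ) ≤ C * M * ε by positivity)
    nlinarith [h3]
  -- sum bounds
  have hZP : (Fintype.card Z : ℝ) - P.card ≤ ε * Fintype.card Z := by nlinarith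
  have hBsum : (B.card : ℝ) * (C * M * ε * (f y₀ : ℝ)) ≤
      ∑ y ∈ B, ((f y : ℝ) - (a y : ℝ)) := by
    calc (B.card : ℝ) * (C * M * ε * (f y₀ : ℝ))
        = ∑ _y ∈ B, C * M * ε * (f y₀ : ℝ) := by
          rw [Finset.sum_const, nsmul_eq_mul]
      _ ≤ _ := Finset.sum_le_sum hkey
  have hall : ∑ y ∈ B, ((f y : ℝ) - (a y : ℝ)) ≤ ∑ y, ((f y : ℝ) - (a y : ℝ)) :=
    Finset.sum_le_sum_of_subset_of_nonneg (Finset.subset_univ B)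
      (fun y _ _ => by
        have := hale y; simp only [sub_nonneg]; exact_mod_cast this)
  have htot : ∑ y, ((f y : ℝ) - (a y : ℝ)) = (Fintype.card Z : ℝ) - P.card := by
    rw [Finset.sum_sub_distrib, ← Nat.cast_sum, ← Nat.cast_sum, hsumf, hsuma]
  have hZbound : (Fintype.card Z : ℝ) ≤ (Fintype.card Y : ℝ) * (C * (f y₀ : ℝ)) := by
    have : ∑ y : Y, (f y : ℝ) ≤ ∑ _y : Y, C * (f y₀ : ℝ) :=
      Finset.sum_le_sum fun y _ => hhom y y₀
    rw [Finset.sum_const, nsmul_eq_mul] at this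
    calc (Fintype.card Z : ℝ) = ∑ y, (f y : ℝ) := by
          rw [← Nat.cast_sum, hsumf]
      _ ≤ _ := by simpa using this
  have hBle : (B.card : ℝ) * M ≤ (Fintype.card Y : ℝ) := by
    have h := hBsum.trans (hall.trans_eq htot)
    have h2 : (B.card : ℝ) * (C * M * ε * (f y₀ : ℝ)) ≤
        ε * ((Fintype.card Y : ℝ) * (C * (f y₀ : ℝ))) := by
      refine h.trans (hZP.trans ?_)
      exact mul_le_mul_of_nonneg_left hZbound hε.le
    have hpos : 0 < C * ε * (f y₀ : ℝ) := by positivity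
    nlinarith
  have hQcard : (Q.card : ℝ) = (Fintype.card Y : ℝ) - B.card := by
    have : (Q.card : ℝ) + B.card = Fintype.card Y := by exact_mod_cast hcardQB
    linarith
  have hgoal : (1 - 1 / M) * (Fintype.card Y : ℝ) ≤ (Q.card : ℝ) := by
    rw [hQcard]
    have : (B.card : ℝ) ≤ (Fintype.card Y : ℝ) / M := by
      rw [le_div_iff₀ hM]; exact hBle
    have hY0 : (0:ℝ) ≤ Fintype.card Y := Nat.cast_nonneg _
    have : (1 - 1 / M) * (Fintype.card Y : ℝ) = (Fintype.card Y : ℝ) - (Fintype.card Y : ℝ) / M := by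
      field_simp
    linarith [this]
  exact hgoal
end

section
/- Let 0 ≤ ε, η, δ < 1/2 and C, S > 0. Let p : X → Y be a map of finite sets, let Y′ ⊆ Y satisfy |Y′| ≤ ε|Y|, and suppose there is Y″ ⊆ Y with |Y″| > (1−η)|Y| such that | |p⁻¹(y)| − S | ≤ δS for all y ∈ Y″, while |p⁻¹(y)| ≤ CS for all y ∈ Y. Then |p⁻¹(Y′)| ≤ (8ε + 4Cη)|X|. -/
open Finset

lemma stmt15_aux {X Y : Type*} [Fintype X] [DecidableEq Y] (p : X → Y) (T : Finset Y) :
    (Finset.univ.filter fun x : X => p x ∈ T).card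
      = ∑ y ∈ T, (Finset.univ.filter fun x => p x = y).card := by
  rw [Finset.card_eq_sum_card_fiberwise (f := p) (t := T)
    (by intro x hx; simpa using hx)]
  refine Finset.sum_congr rfl fun y hy => ?_
  congr 1
  ext x
  simp only [Finset.mem_filter, Finset.mem_univ, true_and, and_iff_right_iff_imp]
  rintro rfl; exact hy

/-- Let `0 ≤ ε, η, δ < 1/2` and `C, S > 0`.  Let `p : X → Y` be a map of
finite sets, `Y′ ⊆ Y` with `|Y′| ≤ ε|Y|`, and suppose that there is `Y″ ⊆ Y` with
`|Y″| > (1−η)|Y|` and `||p⁻¹(y)| − S| ≤ δS` for all `y ∈ Y″`, while `|p⁻¹(y)| ≤ CS` for all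
`y ∈ Y`.  Then `|p⁻¹(Y′)| ≤ (8ε + 4Cη)|X|`. -/
theorem stmt15 {X Y : Type*} [Fintype X] [Fintype Y] [DecidableEq Y]
    (ε η δ C S : ℝ)
    (hε0 : 0 ≤ ε) (hε : ε < 1 / 2)
    (hη0 : 0 ≤ η) (hη : η < 1 / 2)
    (hδ0 : 0 ≤ δ) (hδ : δ < 1 / 2)
    (hC : 0 < C) (hS : 0 < S)
    (p : X → Y) (Y' Y'' : Finset Y)
    (hY' : (Y'.card : ℝ) ≤ ε * (Fintype.card Y : ℝ))
    (hY'' : (1 - η) * (Fintype.card Y : ℝ) < (Y''.card : ℝ))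
    (hfib : ∀ y ∈ Y'',
      |((Finset.univ.filter fun x => p x = y).card : ℝ) - S| ≤ δ * S)
    (hall : ∀ y : Y, ((Finset.univ.filter fun x => p x = y).card : ℝ) ≤ C * S) :
    ((Finset.univ.filter fun x : X => p x ∈ Y').card : ℝ) ≤
      (8 * ε + 4 * C * η) * (Fintype.card X : ℝ) := by
  set N : ℝ := (Fintype.card X : ℝ) with hN
  set M : ℝ := (Fintype.card Y : ℝ) with hM
  have fibnn : ∀ y : Y, (0:ℝ) ≤ ((Finset.univ.filter fun x => p x = y).card : ℝ) :=
    fun y => Nat.cast_nonneg _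
  -- total count
  have htot : ∑ y : Y, ((Finset.univ.filter fun x => p x = y).card : ℝ) = N := by
    rw [← Nat.cast_sum]
    norm_cast
    rw [← stmt15_aux p Finset.univ,
      Finset.filter_true_of_mem (fun x _ => Finset.mem_univ (p x)), Finset.card_univ]
  -- lower bound on each fiber over Y''
  have hlow : ∀ y ∈ Y'', S / 2 ≤ ((Finset.univ.filter fun x => p x = y).card : ℝ) := by
    intro y hy
    have := abs_le.mp (hfib y hy)
    nlinarith [this.1]
  -- S/2 * |Y''| ≤ N
  have h1 : S / 2 * (Y''.card : ℝ) ≤ N := by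
    have : ∑ y ∈ Y'', (S / 2) ≤ ∑ y ∈ Y'', ((Finset.univ.filter fun x => p x = y).card : ℝ) :=
      Finset.sum_le_sum hlow
    rw [Finset.sum_const, nsmul_eq_mul] at this
    have h2 : ∑ y ∈ Y'', ((Finset.univ.filter fun x => p x = y).card : ℝ)
        ≤ ∑ y : Y, ((Finset.univ.filter fun x => p x = y).card : ℝ) :=
      Finset.sum_le_sum_of_subset_of_nonneg (Finset.subset_univ _) (fun y _ _ => fibnn y)
    rw [htot] at h2
    linarith [this, h2]
  -- S * M / 4 ≤ N
  have hMN : S * M / 4 ≤ N := by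
    nlinarith [hY'', (Nat.cast_nonneg (Fintype.card Y) : (0:ℝ) ≤ (Fintype.card Y : ℝ))]
  -- LHS as sum
  have hsum : ((Finset.univ.filter fun x : X => p x ∈ Y').card : ℝ)
      = ∑ y ∈ Y', ((Finset.univ.filter fun x => p x = y).card : ℝ) := by
    rw [← Nat.cast_sum]; norm_cast; exact stmt15_aux p Y'
  -- split Y'
  have hsplit : ∑ y ∈ Y', ((Finset.univ.filter fun x => p x = y).card : ℝ)
      = ∑ y ∈ Y' ∩ Y'', ((Finset.univ.filter fun x => p x = y).card : ℝ)
        + ∑ y ∈ Y' \ Y'', ((Finset.univ.filter fun x => p x = y).card : ℝ) := by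
    rw [← Finset.sum_inter_add_sum_sdiff Y' Y'']
  have hup : ∀ y ∈ Y'', ((Finset.univ.filter fun x => p x = y).card : ℝ) ≤ 2 * S := by
    intro y hy
    have := abs_le.mp (hfib y hy)
    nlinarith [this.2]
  have hA : ∑ y ∈ Y' ∩ Y'', ((Finset.univ.filter fun x => p x = y).card : ℝ)
      ≤ 2 * S * (Y'.card : ℝ) := by
    calc ∑ y ∈ Y' ∩ Y'', ((Finset.univ.filter fun x => p x = y).card : ℝ)
        ≤ ∑ y ∈ Y' ∩ Y'', 2 * S :=
          Finset.sum_le_sum fun y hy => hup y (Finset.mem_inter.mp hy).2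
      _ = ((Y' ∩ Y'').card : ℝ) * (2 * S) := by rw [Finset.sum_const, nsmul_eq_mul]
      _ ≤ (Y'.card : ℝ) * (2 * S) := by
          have h : ((Y' ∩ Y'').card : ℝ) ≤ (Y'.card : ℝ) := by
            exact_mod_cast Finset.card_le_card (Finset.inter_subset_left)
          exact mul_le_mul_of_nonneg_right h (by positivity)
      _ = 2 * S * (Y'.card : ℝ) := by ring
  have hdiffcard : ((Y' \ Y'').card : ℝ) ≤ M - (Y''.card : ℝ) := by
    have h1 : Y' \ Y'' ⊆ Finset.univ \ Y'' := Finset.sdiff_subset_sdiff (Finset.subset_univ _) le_rfl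
    have h2 : (Y' \ Y'').card ≤ (Finset.univ \ Y'').card := Finset.card_le_card h1
    have h3 : (Finset.univ \ Y'').card = Fintype.card Y - Y''.card := by
      rw [Finset.card_sdiff_of_subset (Finset.subset_univ _), Finset.card_univ]
    have h4 : Y''.card ≤ Fintype.card Y := Y''.card_le_univ
    have h5 : ((Y' \ Y'').card : ℝ) ≤ ((Finset.univ \ Y'').card : ℝ) := by exact_mod_cast h2
    rw [h3, Nat.cast_sub h4] at h5
    exact h5
  have hB : ∑ y ∈ Y' \ Y'', ((Finset.univ.filter fun x => p x = y).card : ℝ)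
      ≤ C * S * (M - (Y''.card : ℝ)) := by
    calc ∑ y ∈ Y' \ Y'', ((Finset.univ.filter fun x => p x = y).card : ℝ)
        ≤ ∑ y ∈ Y' \ Y'', C * S := Finset.sum_le_sum fun y _ => hall y
      _ = ((Y' \ Y'').card : ℝ) * (C * S) := by rw [Finset.sum_const, nsmul_eq_mul]
      _ = (C * S) * ((Y' \ Y'').card : ℝ) := by ring
      _ ≤ C * S * (M - (Y''.card : ℝ)) :=
          mul_le_mul_of_nonneg_left hdiffcard (by positivity)
  have hYcard : (0:ℝ) ≤ M := Nat.cast_nonneg _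
  have hNnn : (0:ℝ) ≤ N := Nat.cast_nonneg _
  rw [hsum, hsplit]
  have hMsmall : M - (Y''.card : ℝ) ≤ η * M := by linarith [hY'']
  have hA' : ∑ y ∈ Y' ∩ Y'', ((Finset.univ.filter fun x => p x = y).card : ℝ)
      ≤ 2 * S * (ε * M) :=
    hA.trans (mul_le_mul_of_nonneg_left hY' (by positivity))
  have hB' : ∑ y ∈ Y' \ Y'', ((Finset.univ.filter fun x => p x = y).card : ℝ)
      ≤ C * S * (η * M) :=
    hB.trans (mul_le_mul_of_nonneg_left hMsmall (by positivity))
  have h2e : (0:ℝ) ≤ 2 * ε + C * η := by positivity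
  have hSM : S * M ≤ 4 * N := by linarith
  have final : 2 * S * (ε * M) + C * S * (η * M) ≤ (8 * ε + 4 * C * η) * N := by
    calc 2 * S * (ε * M) + C * S * (η * M) = (2 * ε + C * η) * (S * M) := by ring
      _ ≤ (2 * ε + C * η) * (4 * N) := mul_le_mul_of_nonneg_left hSM h2e
      _ = (8 * ε + 4 * C * η) * N := by ring
  linarith [hA', hB', final]
end

section
/- For every triple of integers d, m, L ≥ 1 there exists n = n(d, m, L) such that the following holds. Let k = F_q be a finite field, V a finite-dimensional k-vector space, and P₁,…,P_L : V → k homogeneous polynomial functions each of degree at least 1 and at most d. Let X := {x ∈ V : Pᵢ(x) = 0 for 1 ≤ i ≤ L} and let a₁,…,a_m ∈ X. Then the set Y = {x ∈ V : Pᵢ(x + a_j) = 0 for all 1 ≤ i ≤ L and 1 ≤ j ≤ m} satisfies |Y| ≥ q^{−n}|V|. -/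
/-!
If polynomials `Fᵢ` over `𝔽_q` in `N` variables have a common zero, they have at least
`q ^ (N - ∑ deg Fᵢ)` common zeros (Warning's second theorem). The indicator of the common zeros is
`f = ∏ (1 - Fᵢ ^ (q - 1))`, of degree at most `(q - 1) ∑ deg Fᵢ`, so it suffices that a polynomial
with a nonzero value is nonzero at `q ^ (N - deg f / (q - 1))` points at least. After reducing
every exponent below `q`, this goes by induction on `N`: write `f = g X₀ ^ s + …` with `s < q`; over
each point where `g` is nonzero, the fibre contains at least `q - s` nonzeros of `f`, and
`(q - s) q ^ (s / (q - 1)) ≥ q` by weighted AM–GM.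

For the theorem, the polynomials `Fᵢⱼ(x) = Pᵢ(x + aⱼ)` have degree at most `d` and vanish at `0`,
so `n = L m d` works.
-/

open Finset MvPolynomial MonomialOrder

universe u

theorem Real.le_sub_mul_rpow_div_sub_one {q s : ℝ} (hq : 1 < q) (hs : 0 ≤ s) (hsq : s ≤ q - 1) :
    q ≤ (q - s) * q ^ (s / (q - 1)) := by
  have hq1 : 0 < q - 1 := by linarith
  have hw : s / (q - 1) + (1 - s / (q - 1)) = 1 := by ring
  have hw₁ : 0 ≤ s / (q - 1) := by positivity
  have hw₂ : 0 ≤ 1 - s / (q - 1) := by rw [sub_nonneg, div_le_one hq1]; exact hsq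
  have hamgm :=
    Real.geom_mean_le_arith_mean2_weighted hw₁ hw₂ zero_le_one (p₂ := q) (by linarith) hw
  have hmean : s / (q - 1) * 1 + (1 - s / (q - 1)) * q = q - s := by field_simp; ring
  rw [Real.one_rpow, one_mul, hmean] at hamgm
  calc q = q ^ (1 - s / (q - 1)) * q ^ (s / (q - 1)) := by
        rw [← Real.rpow_add (by linarith), sub_add_cancel, Real.rpow_one]
    _ ≤ (q - s) * q ^ (s / (q - 1)) := by gcongr

theorem Polynomial.card_sub_natDegree_le_card_eval_ne_zero {K : Type*} [Field K] [Fintype K]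
    [DecidableEq K] {p : Polynomial K} (hp : p ≠ 0) :
    Fintype.card K - p.natDegree ≤ #{y | p.eval y ≠ 0} := by
  have hroots : #{y | p.eval y = 0} ≤ p.natDegree :=
    Polynomial.card_le_degree_of_subset_roots fun y hy => by simp_all [Polynomial.mem_roots hp]
  have := card_filter_add_card_filter_not (s := univ) fun y => p.eval y = 0
  rw [card_univ] at this
  simp only [ne_eq]
  omega

theorem Fintype.card_filter_eq_sum_card_filter_cons {α : Type*} [Fintype α] {n : ℕ}
    (P : (Fin (n + 1) → α) → Prop) [DecidablePred P] :
    #{x | P x} = ∑ x' : Fin n → α, #{y | P (Fin.cons y x')} := by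
  simp only [card_filter]
  rw [← (Fin.consEquiv fun _ => α).sum_comp, Fintype.sum_prod_type_right]
  rfl

namespace MvPolynomial

theorem totalDegree_bind₁_le {σ τ R : Type*} [CommSemiring R] {g : σ → MvPolynomial τ R}
    (hg : ∀ i, (g i).totalDegree ≤ 1) (p : MvPolynomial σ R) :
    (bind₁ g p).totalDegree ≤ p.totalDegree := by
  rw [bind₁, aeval_def, eval₂_eq]
  refine (totalDegree_finsetSum _ _).trans (Finset.sup_le fun c hc => ?_)
  refine (totalDegree_mul _ _).trans ?_
  rw [algebraMap_eq, totalDegree_C, zero_add]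
  refine (totalDegree_finsetProd _ _).trans ((sum_le_sum fun i _ => ?_).trans (le_totalDegree hc))
  exact (totalDegree_pow _ _).trans (mul_le_of_le_one_right' (hg i))

theorem eval_bind₁_X_add_C {σ R : Type*} [CommSemiring R] (a x : σ → R) (p : MvPolynomial σ R) :
    eval x (bind₁ (fun i => X i + C (a i)) p) = eval (x + a) p := by
  rw [eval, eval₂Hom_bind₁]
  simp [Pi.add_def]

theorem totalDegree_bind₁_X_add_C_le {σ R : Type*} [CommSemiring R] (a : σ → R)
    (p : MvPolynomial σ R) : (bind₁ (fun i => X i + C (a i)) p).totalDegree ≤ p.totalDegree :=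
  totalDegree_bind₁_le (fun i => (totalDegree_add _ _).trans <|
    max_le ((totalDegree_monomial_le (Finsupp.single i 1) 1).trans (by simp)) (by simp)) p

variable {K : Type*} [Field K] [Fintype K]

theorem exists_eval_eq_of_exponents_lt_card {σ : Type*} [LinearOrder σ] [WellFoundedGT σ]
    (f : MvPolynomial σ K) :
    ∃ r : MvPolynomial σ K, (∀ x, eval x r = eval x f) ∧ r.totalDegree ≤ f.totalDegree ∧
      ∀ c ∈ r.support, ∀ i, c i < Fintype.card K := by
  -- divide by the field polynomials `∏ a, (X i - C a) = X i ^ q - X i`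
  set b : σ → MvPolynomial σ K := fun i => ∏ a : K, (X i - C a)
  have hb_monic (i : σ) : degLex.Monic (b i) :=
    MonomialOrder.Monic.prod fun a _ => degLex.monic_X_sub_C i a
  have hb_degree (i : σ) : degLex.degree (b i) = Finsupp.single i (Fintype.card K) := by
    rw [degLex.degree_prod_of_regular fun a _ => by
      rw [degLex.monic_X_sub_C i a]; exact isRegular_one]
    simp [degLex.degree_X_sub_C]
  have hb_eval (x : σ → K) (i : σ) : eval x (b i) = 0 := by
    simp only [b, map_prod]
    exact prod_eq_zero (mem_univ (x i)) (by simp)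
  obtain ⟨g, r, hfr, hdeg, hr⟩ :=
    degLex.div (fun i => by rw [(hb_monic i).leadingCoeff_eq_one]; exact isUnit_one) f
  refine ⟨r, fun x => ?_, ?_, fun c hc i => ?_⟩
  · rw [hfr, map_add, Finsupp.linearCombination_apply, map_finsuppSum, Finsupp.sum,
      sum_eq_zero fun i _ => by simp [hb_eval], zero_add]
  · rw [eq_sub_of_add_eq' hfr.symm]
    refine (totalDegree_sub _ _).trans (max_le le_rfl ?_)
    rw [Finsupp.linearCombination_apply, Finsupp.sum]
    refine (totalDegree_finsetSum _ _).trans (Finset.sup_le fun i _ => ?_)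
    rw [smul_eq_mul, mul_comm]
    exact degLex_totalDegree_monotone (hdeg i)
  · have := hr c hc i
    rwa [hb_degree, Finsupp.single_le_iff, not_le] at this

variable [DecidableEq K]

theorem card_sub_natDegree_finSuccEquiv_le_card_fiber {N : ℕ} (f : MvPolynomial (Fin (N + 1)) K)
    (x' : Fin N → K) (hx' : eval x' (finSuccEquiv K N f).leadingCoeff ≠ 0) :
    Fintype.card K - (finSuccEquiv K N f).natDegree ≤ #{y | eval (Fin.cons y x') f ≠ 0} := by
  set F := finSuccEquiv K N f
  set p := F.map (eval x')
  have hp : p.coeff F.natDegree ≠ 0 := by rwa [Polynomial.coeff_map]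
  have hp0 : p ≠ 0 := fun h => hp (by rw [h, Polynomial.coeff_zero])
  calc Fintype.card K - F.natDegree ≤ Fintype.card K - p.natDegree :=
        Nat.sub_le_sub_left Polynomial.natDegree_map_le _
    _ ≤ #{y | p.eval y ≠ 0} := Polynomial.card_sub_natDegree_le_card_eval_ne_zero hp0
    _ = #{y | eval (Fin.cons y x') f ≠ 0} := by simp only [p, F, eval_eq_eval_mv_eval']

theorem card_eval_leadingCoeff_finSuccEquiv_ne_zero_mul_le {N : ℕ}
    (f : MvPolynomial (Fin (N + 1)) K) :
    #{x' | eval x' (finSuccEquiv K N f).leadingCoeff ≠ 0} *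
        (Fintype.card K - (finSuccEquiv K N f).natDegree) ≤ #{x | eval x f ≠ 0} := by
  rw [Fintype.card_filter_eq_sum_card_filter_cons, ← smul_eq_mul, ← sum_const]
  calc _ ≤ ∑ x' ∈ {x' | eval x' (finSuccEquiv K N f).leadingCoeff ≠ 0},
          #{y | eval (Fin.cons y x') f ≠ 0} :=
        sum_le_sum fun x' hx' => card_sub_natDegree_finSuccEquiv_le_card_fiber f x'
          (mem_filter.1 hx').2
    _ ≤ _ := sum_le_sum_of_subset (filter_subset _ _)

theorem pow_card_le_card_eval_ne_zero_mul_rpow_of_lt_card :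
    ∀ {N : ℕ} {f : MvPolynomial (Fin N) K}, f ≠ 0 →
      (∀ c ∈ f.support, ∀ i, c i < Fintype.card K) →
      (Fintype.card K : ℝ) ^ N ≤ #{x | eval x f ≠ 0} *
        (Fintype.card K : ℝ) ^ ((f.totalDegree : ℝ) / (Fintype.card K - 1))
  | 0, f, hf, _ => by
    rw [f.eq_C_of_isEmpty] at hf ⊢
    simp [C_ne_zero.mp hf]
  | N + 1, f, hf, hf_lt => by
    set F := finSuccEquiv K N f
    set g := F.leadingCoeff
    set s := F.natDegree
    have hq : (1 : ℝ) < Fintype.card K := by exact_mod_cast Fintype.one_lt_card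
    have hg : g ≠ 0 := Polynomial.leadingCoeff_ne_zero.2 (by simpa [F] using hf)
    have hg_lt : ∀ c ∈ g.support, ∀ i, c i < Fintype.card K := fun c hc i => by
      simpa using hf_lt _ (mem_support_coeff_finSuccEquiv.1 hc) i.succ
    have hs : s < Fintype.card K := by
      rw [show s = degreeOf 0 f from natDegree_finSuccEquiv f, degreeOf_lt_iff Fintype.card_pos]
      exact fun c hc => hf_lt c hc 0
    have hdeg : g.totalDegree + s ≤ f.totalDegree := totalDegree_coeff_finSuccEquiv_add_le f s hg
    have hcount : (#{x' | eval x' g ≠ 0} : ℝ) * (Fintype.card K - s) ≤ #{x | eval x f ≠ 0} := by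
      rw [← Nat.cast_sub hs.le]
      exact_mod_cast card_eval_leadingCoeff_finSuccEquiv_ne_zero_mul_le f
    have hfibre := Real.le_sub_mul_rpow_div_sub_one hq (Nat.cast_nonneg s)
      (by rw [le_sub_iff_add_le]; exact_mod_cast hs)
    calc (Fintype.card K : ℝ) ^ (N + 1) = (Fintype.card K : ℝ) ^ N * Fintype.card K := pow_succ ..
      _ ≤ (#{x' | eval x' g ≠ 0} *
            (Fintype.card K : ℝ) ^ ((g.totalDegree : ℝ) / (Fintype.card K - 1))) *
          ((Fintype.card K - s) * (Fintype.card K : ℝ) ^ ((s : ℝ) / (Fintype.card K - 1))) := by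
        gcongr
        exact pow_card_le_card_eval_ne_zero_mul_rpow_of_lt_card hg hg_lt
      _ = (#{x' | eval x' g ≠ 0} * (Fintype.card K - s)) *
          (Fintype.card K : ℝ) ^ (((g.totalDegree + s : ℕ) : ℝ) / (Fintype.card K - 1)) := by
        rw [Nat.cast_add, add_div, Real.rpow_add (by linarith)]; ring
      _ ≤ _ := by
        gcongr
        exact hq.le

theorem pow_card_le_card_eval_ne_zero_mul_rpow {N : ℕ} {f : MvPolynomial (Fin N) K}
    {x₀ : Fin N → K} (h₀ : eval x₀ f ≠ 0) :
    (Fintype.card K : ℝ) ^ N ≤ #{x | eval x f ≠ 0} *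
      (Fintype.card K : ℝ) ^ ((f.totalDegree : ℝ) / (Fintype.card K - 1)) := by
  obtain ⟨r, hr_eval, hr_deg, hr_lt⟩ := exists_eval_eq_of_exponents_lt_card f
  have hr : r ≠ 0 := by rintro rfl; exact h₀ (by simpa using (hr_eval x₀).symm)
  have hq : (1 : ℝ) < Fintype.card K := by exact_mod_cast Fintype.one_lt_card
  refine (pow_card_le_card_eval_ne_zero_mul_rpow_of_lt_card hr hr_lt).trans ?_
  simp only [hr_eval]
  gcongr
  exact hq.le

theorem eval_prod_one_sub_pow_card_sub_one_ne_zero_iff {σ ι : Type*} [Fintype ι]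
    (F : ι → MvPolynomial σ K) (x : σ → K) :
    eval x (∏ i, (1 - F i ^ (Fintype.card K - 1))) ≠ 0 ↔ ∀ i, eval x (F i) = 0 := by
  simp only [map_prod, map_sub, map_one, map_pow, prod_ne_zero_iff, mem_univ, true_implies]
  refine forall_congr' fun i => ?_
  by_cases h : eval x (F i) = 0
  · simp [h, zero_pow (Nat.sub_ne_zero_of_lt Fintype.one_lt_card)]
  · simp [h, FiniteField.pow_card_sub_one_eq_one _ h]

theorem totalDegree_prod_one_sub_pow_le {R σ ι : Type*} [CommRing R] [Fintype ι]
    (F : ι → MvPolynomial σ R) (n : ℕ) :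
    (∏ i, (1 - F i ^ n)).totalDegree ≤ n * ∑ i, (F i).totalDegree := by
  rw [mul_sum]
  refine (totalDegree_finsetProd _ _).trans (sum_le_sum fun i _ => ?_)
  exact (totalDegree_sub _ _).trans (max_le (by simp) (totalDegree_pow _ _))

theorem pow_card_le_card_commonZeros_mul_pow {ι : Type*} [Fintype ι] {N : ℕ}
    (F : ι → MvPolynomial (Fin N) K) {x₀ : Fin N → K} (h₀ : ∀ i, eval x₀ (F i) = 0) :
    Fintype.card K ^ N ≤
      #{x | ∀ i, eval x (F i) = 0} * Fintype.card K ^ ∑ i, (F i).totalDegree := by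
  have hq : (1 : ℝ) < Fintype.card K := by exact_mod_cast Fintype.one_lt_card
  have hbound := pow_card_le_card_eval_ne_zero_mul_rpow
    ((eval_prod_one_sub_pow_card_sub_one_ne_zero_iff F x₀).2 h₀)
  simp only [eval_prod_one_sub_pow_card_sub_one_ne_zero_iff] at hbound
  have hexp : ((∏ i, (1 - F i ^ (Fintype.card K - 1))).totalDegree : ℝ) / (Fintype.card K - 1)
      ≤ ∑ i, (F i).totalDegree := by
    rw [div_le_iff₀ (by linarith), mul_comm, ← Nat.cast_pred Fintype.card_pos]
    exact_mod_cast totalDegree_prod_one_sub_pow_le F (Fintype.card K - 1)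
  have hY : (Fintype.card K : ℝ) ^ N ≤
      #{x | ∀ i, eval x (F i) = 0} * (Fintype.card K : ℝ) ^ ((∑ i, (F i).totalDegree : ℕ) : ℝ) :=
    hbound.trans (by gcongr; exact hq.le)
  rw [Real.rpow_natCast] at hY
  exact_mod_cast hY

end MvPolynomial

theorem stmt16_general (d m L : ℕ) :
    ∃ n : ℕ,
      ∀ (k : Type u) [Field k] [Fintype k] [DecidableEq k] (N : ℕ)
        (P : Fin L → MvPolynomial (Fin N) k),
        (∀ i, ∃ e : ℕ, 1 ≤ e ∧ e ≤ d ∧ (P i).IsHomogeneous e) →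
        ∀ a : Fin m → (Fin N → k),
          (∀ j i, MvPolynomial.eval (a j) (P i) = 0) →
          ((Fintype.card k : ℝ) ^ n)⁻¹ * (Fintype.card (Fin N → k) : ℝ) ≤
            ((Finset.univ.filter
                (fun x : Fin N → k =>
                  ∀ (i : Fin L) (j : Fin m), MvPolynomial.eval (x + a j) (P i) = 0)).card : ℝ) := by
  refine ⟨L * m * d, fun k _ _ _ N P hP a ha => ?_⟩
  set F : Fin L × Fin m → MvPolynomial (Fin N) k :=
    fun ij => bind₁ (fun t => X t + C (a ij.2 t)) (P ij.1)
  have hF_deg : ∑ ij, (F ij).totalDegree ≤ L * m * d := by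
    calc ∑ ij, (F ij).totalDegree ≤ ∑ _ij : Fin L × Fin m, d := sum_le_sum fun ij _ => by
          obtain ⟨e, -, hed, hPe⟩ := hP ij.1
          exact (totalDegree_bind₁_X_add_C_le _ _).trans (hPe.totalDegree_le.trans hed)
      _ = L * m * d := by simp
  have hY := pow_card_le_card_commonZeros_mul_pow F (x₀ := 0) fun ij => by
    rw [eval_bind₁_X_add_C, zero_add]; exact ha _ _
  simp only [F, eval_bind₁_X_add_C, Prod.forall] at hY
  rw [Fintype.card_fun, Fintype.card_fin, inv_mul_le_iff₀ (by positivity), mul_comm]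
  exact_mod_cast hY.trans (Nat.mul_le_mul_left _ (Nat.pow_le_pow_right Fintype.card_pos hF_deg))

/-- For every triple `d, m, L ≥ 1` there exists `n = n(d, m, L)` such that:
for every finite field `k = F_q`, every `V = k^N`, homogeneous polynomials
`P₁,…,P_L : V → k` of degrees between `1` and `d`, and points `a₁,…,a_m` of
`X = {x : Pᵢ(x) = 0 ∀i}`, the set `Y = {x ∈ V : Pᵢ(x + a_j) = 0 ∀ i, j}` satisfies
`|Y| ≥ q^{−n} |V|`. -/
theorem stmt16 (d m L : ℕ) (hd : 1 ≤ d) (hm : 1 ≤ m) (hL : 1 ≤ L) :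
    ∃ n : ℕ,
      ∀ (k : Type u) [Field k] [Fintype k] [DecidableEq k] (N : ℕ)
        (P : Fin L → MvPolynomial (Fin N) k),
        (∀ i, ∃ e : ℕ, 1 ≤ e ∧ e ≤ d ∧ (P i).IsHomogeneous e) →
        ∀ a : Fin m → (Fin N → k),
          (∀ j i, MvPolynomial.eval (a j) (P i) = 0) →
          ((Fintype.card k : ℝ) ^ n)⁻¹ * (Fintype.card (Fin N → k) : ℝ) ≤
            ((Finset.univ.filter
                (fun x : Fin N → k =>
                  ∀ (i : Fin L) (j : Fin m), MvPolynomial.eval (x + a j) (P i) = 0)).card : ℝ) :=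
  stmt16_general d m L
end

section
/- Let V be a finite-dimensional vector space over F_q with dim V > D ≥ 0, and let ℙ(V) be the projective space of V. If Z ⊆ ℙ(V) is D-large, i.e. Z ∩ ℙ(W) ≠ ∅ for every linear subspace W ⊆ V with dim W > D (where ℙ(W) ⊆ ℙ(V) via the natural embedding), then |Z| ≥ |ℙ(V)| / (2 q^{D+1}). -/
open scoped LinearAlgebra.Projectivization
open Module

/-!
Choose a subspace `T` maximal among those with `ℙ(T) ∩ Z = ∅`. Largeness forces
`dim T ≤ D`. For a point `p` of `ℙ(V/T)` the preimage `W` of the line `p` strictly contains `T`,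
so by maximality `ℙ(W)` meets `Z`; thus projecting away from `T` maps `Z` onto `ℙ(V/T)`. Hence
`|Z| ≥ |ℙ(V/T)| ≥ q^(dim V - D - 1)`, while `|ℙ(V)| < q^(dim V)`.
-/

namespace Projectivization

section DivisionRing

variable {k V : Type*} [DivisionRing k] [AddCommGroup V] [Module k V]

theorem submodule_le_iff_rep_mem (z : ℙ k V) (W : Submodule k V) :
    z.submodule ≤ W ↔ z.rep ∈ W := by
  rw [submodule_eq, Submodule.span_singleton_le_iff_mem]

theorem eq_of_submodule_le {u v : ℙ k V} (h : u.submodule ≤ v.submodule) : u = v :=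
  submodule_injective <|
    Submodule.eq_of_le_of_finrank_eq h (by rw [finrank_submodule, finrank_submodule])

theorem exists_submodule_maximal_avoiding [IsNoetherian k V] (Z : Set (ℙ k V)) :
    ∃ T : Submodule k V, (∀ z ∈ Z, ¬z.submodule ≤ T) ∧
      ∀ W : Submodule k V, T < W → ∃ z ∈ Z, z.submodule ≤ W := by
  have hbot : ∀ z ∈ Z, ¬z.submodule ≤ ⊥ := fun z _ h ↦
    z.rep_nonzero <| (Submodule.mem_bot k).mp <| (submodule_le_iff_rep_mem z ⊥).mp h
  obtain ⟨T, hT, hmax⟩ :=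
    set_has_maximal_iff_noetherian.mpr inferInstance {T | ∀ z ∈ Z, ¬z.submodule ≤ T} ⟨⊥, hbot⟩
  refine ⟨T, hT, fun W hTW ↦ ?_⟩
  by_contra! hW
  exact hmax W (fun z hz h ↦ (hW z hz h).elim) hTW

end DivisionRing

variable {k V : Type*} [Field k] [AddCommGroup V] [Module k V]

theorem card_lt_card_pow_finrank [Finite k] [Module.Finite k V] :
    Nat.card (ℙ k V) < Nat.card k ^ finrank k V := by
  have : Finite V := Module.finite_of_finite k
  have hk : 1 < Nat.card k := Finite.one_lt_card
  rw [← natCard_eq_pow_finrank, card' k V]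
  exact Nat.lt_succ_of_le (Nat.le_mul_of_pos_right _ (by omega))

theorem card_pow_finrank_sub_one_le [Finite k] (h : 0 < finrank k V) :
    Nat.card k ^ (finrank k V - 1) ≤ Nat.card (ℙ k V) := by
  rw [card_of_finrank k V rfl]
  exact Finset.single_le_sum (fun _ _ ↦ Nat.zero_le _) (Finset.mem_range.mpr (by omega))

theorem card_quotient_le_ncard {T : Submodule k V} {Z : Set (ℙ k V)} (hZ : Z.Finite)
    (hZT : ∀ z ∈ Z, ¬z.submodule ≤ T)
    (hmax : ∀ W : Submodule k V, T < W → ∃ z ∈ Z, z.submodule ≤ W) :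
    Nat.card (ℙ k (V ⧸ T)) ≤ Z.ncard := by
  have hne (z : Z) : T.mkQ z.1.rep ≠ 0 := by
    simpa [submodule_le_iff_rep_mem] using hZT z z.2
  have : Finite Z := hZ
  refine Nat.card_le_card_of_surjective (fun z ↦ mk k (T.mkQ z.1.rep) (hne z)) fun p ↦ ?_
  obtain ⟨v, hv⟩ := T.mkQ_surjective p.rep
  have hTW : T < p.submodule.comap T.mkQ := by
    refine SetLike.lt_iff_le_and_exists.mpr ⟨fun x hx ↦ ?_, v, ?_, fun hvT ↦ p.rep_nonzero ?_⟩
    · simp [(Submodule.Quotient.mk_eq_zero T).mpr hx]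
    · simp [hv, submodule_eq, Submodule.mem_span_singleton_self]
    · rw [← hv]; exact (Submodule.Quotient.mk_eq_zero T).mpr hvT
  obtain ⟨z, hz, hzW⟩ := hmax _ hTW
  refine ⟨⟨z, hz⟩, eq_of_submodule_le ?_⟩
  rw [submodule_mk, Submodule.span_singleton_le_iff_mem]
  exact (submodule_le_iff_rep_mem z _).mp hzW

end Projectivization

open Projectivization

/-- Let `V` be a finite-dimensional vector space over `F_q` with
`dim V > D`, and let `ℙ(V)` be its projective space.  If `Z ⊆ ℙ(V)` is `D`-large, i.e.
`Z` meets `ℙ(W)` for every linear subspace `W ⊆ V` of dimension `> D` (a point `z ∈ ℙ(V)`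
lies in `ℙ(W)` iff its line `z.submodule` is contained in `W`), then
`|Z| ≥ |ℙ(V)| / (2 q^{D+1})`. -/
theorem stmt17 (k : Type*) [Field k] [Fintype k]
    (V : Type*) [AddCommGroup V] [Module k V] [Module.Finite k V]
    (D : ℕ) (hD : D < Module.finrank k V)
    (Z : Set (Projectivization k V))
    (hlarge : ∀ W : Submodule k V, D < Module.finrank k W →
      ∃ z ∈ Z, z.submodule ≤ W) :
    (Nat.card (Projectivization k V) : ℝ) / (2 * (Fintype.card k : ℝ) ^ (D + 1)) ≤
      (Z.ncard : ℝ) := by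
  have : Finite V := Module.finite_of_finite k
  obtain ⟨T, hZT, hmax⟩ := exists_submodule_maximal_avoiding Z
  have hT : finrank k T ≤ D := by
    by_contra! h
    obtain ⟨z, hz, hzT⟩ := hlarge T h
    exact hZT z hz hzT
  have hrank := T.finrank_quotient_add_finrank
  have hq : 1 < Nat.card k := Finite.one_lt_card
  have hcard : Nat.card (ℙ k V) ≤ Z.ncard * (2 * Nat.card k ^ (D + 1)) :=
    calc Nat.card (ℙ k V) ≤ Nat.card k ^ finrank k V := card_lt_card_pow_finrank.le
      _ ≤ Nat.card k ^ (D + 1) * Nat.card k ^ (finrank k (V ⧸ T) - 1) := by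
        rw [← pow_add]; exact Nat.pow_le_pow_right (by omega) (by omega)
      _ ≤ Nat.card k ^ (D + 1) * Z.ncard := Nat.mul_le_mul_left _ <|
        (card_pow_finrank_sub_one_le (by omega)).trans (card_quotient_le_ncard Z.toFinite hZT hmax)
      _ ≤ Z.ncard * (2 * Nat.card k ^ (D + 1)) := by
        rw [mul_comm]; exact Nat.mul_le_mul_left _ (Nat.le_mul_of_pos_left _ two_pos)
  rw [← Nat.card_eq_fintype_card, div_le_iff₀ (by positivity)]
  exact_mod_cast hcard
end

section
/- Let V be a finite-dimensional vector space over F_q, let P₁,…,P_s : V → F_q be homogeneous polynomial functions of degrees d₁,…,d_s ≥ 1, and set D := Σᵢ dᵢ. Assume dim V > D. Let Y ⊆ ℙ(V) be the set of points of projective space corresponding to the nonzero common zeros {v ∈ V ∖ {0} : Pᵢ(v) = 0 for all i}. Then |Y| ≥ |ℙ(V)| / (2 q^{D+1}). -/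
/-!
Let `Z ⊆ k^N` be the affine common zero set and `M = D + 1`. For every matrix `B : k^M → k^N`,
Chevalley–Warning applied to the polynomials `Pᵢ ∘ B` (degrees `dᵢ`, `M > D` variables, no constant
terms) gives a nonzero `x` with `B x ∈ Z`. For fixed `x ≠ 0` the map `B ↦ B x` is a surjective
additive map, so it hits `Z` for exactly a fraction `|Z| / q^N` of all matrices. Double counting the
pairs `(B, x)` yields `q^N ≤ |Z| (q^M - 1)`. Since `|Z| = |Y| (q - 1) + 1` and
`q^N = |ℙ(V)| (q - 1) + 1`, this gives `|ℙ(V)| ≤ 2 q^M |Y|`.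
-/

open Finset MvPolynomial Matrix

namespace MvPolynomial.IsHomogeneous

variable {R σ : Type*} [CommSemiring R] {φ : MvPolynomial σ R} {n : ℕ}

theorem eval_smul (h : φ.IsHomogeneous n) (c : R) (x : σ → R) :
    eval (c • x) φ = c ^ n * eval x φ := by
  rw [eval_eq, eval_eq, mul_sum]
  refine sum_congr rfl fun d hd => ?_
  have hdeg : ∑ i ∈ d.support, d i = n := by
    simpa [Finsupp.weight_apply, Finsupp.sum] using h (mem_support_iff.mp hd)
  simp only [Pi.smul_apply, smul_eq_mul, mul_pow, prod_mul_distrib, prod_pow_eq_pow_sum, hdeg]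
  ring

theorem constantCoeff_eq_zero (h : φ.IsHomogeneous n) (hn : n ≠ 0) : constantCoeff φ = 0 := by
  rw [constantCoeff_eq]
  exact h.coeff_eq_zero (by simpa using hn.symm)

theorem eval_smul_eq_zero_iff [NoZeroDivisors R] (h : φ.IsHomogeneous n) {c : R} (hc : c ≠ 0)
    (x : σ → R) : eval (c • x) φ = 0 ↔ eval x φ = 0 := by
  simp [h.eval_smul, pow_ne_zero n hc]

end MvPolynomial.IsHomogeneous

theorem exists_ne_zero_forall_eval_eq_zero {K σ ι : Type*} [Field K] [Fintype K] [Fintype σ]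
    [Fintype ι] {f : ι → MvPolynomial σ K} (h₀ : ∀ i, constantCoeff (f i) = 0)
    (h : ∑ i, (f i).totalDegree < Fintype.card σ) : ∃ x ≠ 0, ∀ i, eval x (f i) = 0 := by
  classical
  obtain ⟨p, _⟩ := CharP.exists K
  let zero : {x : σ → K // ∀ i, eval x (f i) = 0} := ⟨0, fun i => by simpa using h₀ i⟩
  have hp := char_dvd_card_solutions_of_fintype_sum_lt p h
  have hcard : 1 < Fintype.card {x : σ → K // ∀ i, eval x (f i) = 0} :=
    (CharP.char_is_prime K p).one_lt.trans_le
      (Nat.le_of_dvd (Fintype.card_pos_iff.mpr ⟨zero⟩) hp)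
  obtain ⟨x, hx⟩ := Fintype.exists_ne_of_one_lt_card hcard zero
  exact ⟨x, fun h => hx (Subtype.ext h), x.2⟩

theorem AddMonoidHom.card_filter_comp_mul_card {G H : Type*} [AddGroup G] [AddGroup H] [Fintype G]
    [Fintype H] [DecidableEq H] {f : G →+ H} (hf : Function.Surjective f) (p : H → Prop)
    [DecidablePred p] : #{g | p (f g)} * Fintype.card H = #{h | p h} * Fintype.card G := by
  have hcount (q : H → Prop) [DecidablePred q] :
      #{g | q (f g)} = #{h | q h} * #{g | f g = 0} := by
    rw [card_eq_sum_card_fiberwise (f := f) (t := {h | q h}) (fun g hg => by simpa using hg),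
      sum_congr rfl fun h hh => ?_, sum_const, smul_eq_mul]
    rw [filter_filter, ← AddMonoidHom.card_fiber_eq_of_mem_range f (hf h) (hf 0)]
    congr 1
    ext g
    simp only [mem_filter, mem_univ, true_and, and_iff_right_iff_imp] at hh ⊢
    rintro rfl
    exact hh
  have hG : Fintype.card G = Fintype.card H * #{g | f g = 0} := by
    simpa using hcount fun _ => True
  rw [hcount p, hG]
  ring

theorem Matrix.mulVec_surjective_of_ne_zero {m n K : Type*} [Fintype n] [DecidableEq n]
    [DivisionRing K] {x : n → K} (hx : x ≠ 0) :
    Function.Surjective fun B : Matrix m n K => B *ᵥ x := by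
  obtain ⟨j, hj⟩ := Function.ne_iff.mp hx
  intro v
  refine ⟨vecMulVec v (Pi.single j (x j)⁻¹), ?_⟩
  dsimp only
  rw [vecMulVec_mulVec, single_dotProduct, inv_mul_cancel₀ hj, MulOpposite.op_one, one_smul]

theorem Matrix.eval_bind₁_toMvPolynomial {R σ τ : Type*} [CommSemiring R] [Fintype τ]
    (B : Matrix σ τ R) (φ : MvPolynomial σ R) (x : τ → R) :
    eval x (bind₁ B.toMvPolynomial φ) = eval (B *ᵥ x) φ := by
  rw [eval, eval₂Hom_bind₁]
  exact congrArg (eval₂Hom (RingHom.id R) · φ) (funext (toMvPolynomial_eval_eq_apply B · x))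

theorem card_pow_le_card_zeros_mul {K σ τ ι : Type*} [Field K] [Fintype K] [Fintype σ]
    [Fintype τ] [Fintype ι] {P : ι → MvPolynomial σ K} {d : ι → ℕ}
    (hP : ∀ i, (P i).IsHomogeneous (d i)) (hd : ∀ i, d i ≠ 0) (hτ : ∑ i, d i < Fintype.card τ) :
    Fintype.card K ^ Fintype.card σ ≤
      Nat.card {v : σ → K // ∀ i, eval v (P i) = 0} * (Fintype.card K ^ Fintype.card τ - 1) := by
  classical
  let r (B : Matrix σ τ K) (x : τ → K) : Prop := ∀ i, eval (B *ᵥ x) (P i) = 0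
  let t : Finset (τ → K) := {x | x ≠ 0}
  have above (B : Matrix σ τ K) : 1 ≤ #(t.bipartiteAbove r B) := by
    have hPB (i : ι) : (bind₁ B.toMvPolynomial (P i)).IsHomogeneous (d i) := by
      simpa using (hP i).aeval B.toMvPolynomial (toMvPolynomial_isHomogeneous B)
    obtain ⟨x, hx0, hx⟩ := exists_ne_zero_forall_eval_eq_zero
      (fun i => (hPB i).constantCoeff_eq_zero (hd i))
      ((sum_le_sum fun i _ => (hPB i).totalDegree_le).trans_lt hτ)
    refine card_pos.mpr ⟨x, ?_⟩
    simp only [bipartiteAbove, mem_filter, mem_univ, true_and, t, r]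
    exact ⟨hx0, fun i => by simpa [eval_bind₁_toMvPolynomial] using hx i⟩
  have below (x : τ → K) (hx : x ∈ t) :
      #(univ.bipartiteBelow r x) * Fintype.card (σ → K) =
        Nat.card {v : σ → K // ∀ i, eval v (P i) = 0} * Fintype.card (Matrix σ τ K) := by
    rw [Nat.card_eq_fintype_card, Fintype.card_subtype]
    exact AddMonoidHom.card_filter_comp_mul_card (f := mulVec.addMonoidHomLeft x)
      (mulVec_surjective_of_ne_zero (by simpa [t] using hx)) (fun v => ∀ i, eval v (P i) = 0)
  have ht : #t = Fintype.card K ^ Fintype.card τ - 1 := by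
    simp [t, filter_ne', card_univ]
  refine Nat.le_of_mul_le_mul_left ?_ (Fintype.card_pos (α := Matrix σ τ K))
  rw [← Fintype.card_fun]
  calc Fintype.card (Matrix σ τ K) * Fintype.card (σ → K)
      ≤ (∑ B, #(t.bipartiteAbove r B)) * Fintype.card (σ → K) := by
        gcongr
        simpa using card_nsmul_le_sum univ _ 1 fun B _ => above B
    _ = ∑ x ∈ t, #(univ.bipartiteBelow r x) * Fintype.card (σ → K) := by
        rw [sum_card_bipartiteAbove_eq_sum_card_bipartiteBelow, sum_mul]
    _ = _ := by
        rw [sum_congr rfl below, sum_const, smul_eq_mul, ht]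
        ring

open scoped LinearAlgebra.Projectivization

theorem Projectivization.card_preimage_mk' {k V : Type*} [DivisionRing k] [AddCommGroup V]
    [Module k V] (Y : Set (ℙ k V)) :
    Nat.card {v : {v : V // v ≠ 0} // mk' k v ∈ Y} = Nat.card Y * (Nat.card k - 1) := by
  have e : {v : {v : V // v ≠ 0} // mk' k v ∈ Y} ≃ Y × kˣ :=
    ((nonZeroEquivProjectivizationProdUnits k V).subtypeEquiv fun v => Iff.rfl).trans
      (Equiv.prodSubtypeFstEquivSubtypeProd (p := (· ∈ Y)))
  rw [Nat.card_congr e, Nat.card_prod, Nat.card_units]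

theorem card_zeros_eq_ncard_mul_add_one {K σ ι : Type*} [Field K] [Finite K] [Finite σ]
    {P : ι → MvPolynomial σ K} {d : ι → ℕ} (hP : ∀ i, (P i).IsHomogeneous (d i))
    (hd : ∀ i, d i ≠ 0) :
    Nat.card {v : σ → K // ∀ i, eval v (P i) = 0} =
      Set.ncard {z : ℙ K (σ → K) | ∀ i, eval z.rep (P i) = 0} * (Nat.card K - 1) + 1 := by
  set S : Set (σ → K) := {v | ∀ i, eval v (P i) = 0}
  set Y : Set (ℙ K (σ → K)) := {z | ∀ i, eval z.rep (P i) = 0}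
  have hmk (v : σ → K) (hv : v ≠ 0) : Projectivization.mk K v hv ∈ Y ↔ v ∈ S := by
    obtain ⟨a, ha⟩ := Projectivization.exists_smul_eq_mk_rep K v hv
    simp only [Y, S, Set.mem_ofPred_eq, ← ha, Units.smul_def,
      (hP _).eval_smul_eq_zero_iff a.ne_zero]
  have e : {v : {v : σ → K // v ≠ 0} // Projectivization.mk' K v ∈ Y} ≃ ↥(S \ {0}) :=
    (Equiv.subtypeSubtypeEquivSubtypeExists _ _).trans <| Equiv.subtypeEquivRight fun v => by
      simp only [Set.mem_sdiff, Set.mem_singleton_iff]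
      exact ⟨fun ⟨hv, h⟩ => ⟨(hmk v hv).1 h, hv⟩, fun ⟨h, hv⟩ => ⟨hv, (hmk v hv).2 h⟩⟩
  have h0 : (0 : σ → K) ∈ S := fun i => by
    rw [eval_zero, (hP i).constantCoeff_eq_zero (hd i)]
  change Nat.card S = _
  rw [Nat.card_coe_set_eq, ← Set.ncard_sdiff_singleton_add_one h0, ← Nat.card_coe_set_eq,
    ← Nat.card_congr e, Projectivization.card_preimage_mk', Nat.card_coe_set_eq]

theorem le_mul_two_mul_of_mul_add_one_le {a y r Q : ℕ} (hQ : Q ≤ a * r + 1)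
    (h : a * r + 1 ≤ (y * r + 1) * (Q - 1)) : a ≤ y * (2 * Q) := by
  obtain ⟨Q, rfl⟩ : ∃ Q', Q = Q' + 1 :=
    Nat.exists_eq_add_one.mpr (Nat.pos_of_ne_zero fun hQ0 => by simp [hQ0] at h)
  rw [Nat.add_sub_cancel] at h
  have hyr : 1 ≤ y * r := by
    by_contra! h0
    rw [Nat.lt_one_iff.mp h0] at h
    omega
  have hr : 0 < r := Nat.pos_of_ne_zero fun hr => by simp [hr] at hyr
  refine Nat.le_of_mul_le_mul_right ?_ hr
  nlinarith

/-- Let `V = F_q^N`, let `P₁,…,P_s` be homogeneous polynomials of degrees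
`d₁,…,d_s ≥ 1` with `D := Σᵢ dᵢ < N = dim V`, and let `Y ⊆ ℙ(V)` be the projectivized set
of common nonzero zeros of the `Pᵢ` (a point of `ℙ(V)` is a zero iff any, equivalently
every, representative vector is, by homogeneity).  Then `|Y| ≥ |ℙ(V)| / (2 q^{D+1})`. -/
theorem stmt18 (k : Type*) [Field k] [Fintype k] (N s : ℕ)
    (dg : Fin s → ℕ) (hdg : ∀ i, 1 ≤ dg i)
    (P : Fin s → MvPolynomial (Fin N) k)
    (hP : ∀ i, (P i).IsHomogeneous (dg i))
    (hdim : (∑ i, dg i) < N) :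
    (Nat.card (Projectivization k (Fin N → k)) : ℝ) /
        (2 * (Fintype.card k : ℝ) ^ ((∑ i, dg i) + 1)) ≤
      (Set.ncard
        {z : Projectivization k (Fin N → k) |
          ∀ i, MvPolynomial.eval z.rep (P i) = 0} : ℝ) := by
  have hd (i : Fin s) : dg i ≠ 0 := Nat.one_le_iff_ne_zero.mp (hdg i)
  have hzeros := card_pow_le_card_zeros_mul (τ := Fin (∑ i, dg i + 1)) hP hd (by simp)
  rw [card_zeros_eq_ncard_mul_add_one hP hd] at hzeros
  have hV := Projectivization.card' k (Fin N → k)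
  simp only [Nat.card_eq_fintype_card, Fintype.card_fun, Fintype.card_fin] at hzeros hV
  rw [hV] at hzeros
  have hQ : Fintype.card k ^ (∑ i, dg i + 1) ≤ Fintype.card k ^ N :=
    Nat.pow_le_pow_right Fintype.card_pos hdim
  rw [div_le_iff₀ (by positivity)]
  exact_mod_cast le_mul_two_mul_of_mul_add_one_le (hV ▸ hQ) hzeros
end
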